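/- arXiv:1710.02402 — 5 statements merged into one kernel-verified Lean document; each statement's English description precedes it below -/
import Mathlib

section
/- Let λ < 0 and let y : (-ε, ε) → ℝ be a smooth function satisfying y(e^λ x) = e^λ y(x) for all x ∈ (-ε, ε), with y(0) = 0 and y'(0) = 0. If y' extends continuously to 0 from the right (i.e., lim_{x→0⁺} y'(x) exists and equals 0), then y(x) = 0 for all x ≥ 0 in the domain. -/
open Filter Topology Set Real

/-- Let λ < 0 and y smooth on (-ε,ε) with y(e^λ x) = e^λ y(x), y(0) = 0,
y'(0) = 0. If y' extends continuously to 0 from the right with limit 0,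
then y vanishes identically for x ≥ 0 in the domain. -/
theorem hyperbolic_invariant_graph_vanishes (lam ε : ℝ) (hlam : lam < 0) (hε : 0 < ε)
    (y : ℝ → ℝ) (hy : ContDiffOn ℝ (⊤ : ℕ∞) y (Ioo (-ε) ε))
    (hfe : ∀ x ∈ Ioo (-ε) ε, y (Real.exp lam * x) = Real.exp lam * y x)
    (hy0 : y 0 = 0) (hy'0 : deriv y 0 = 0)
    (hlim : Tendsto (deriv y) (𝓝[>] (0 : ℝ)) (𝓝 0)) :
    ∀ x ∈ Ico (0 : ℝ) ε, y x = 0 := by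
  have hq0 : 0 < Real.exp lam := Real.exp_pos lam
  have hq1 : Real.exp lam < 1 := Real.exp_lt_one_iff.mpr hlam
  rintro x ⟨hx0, hxε⟩
  rcases eq_or_lt_of_le hx0 with h | hx0
  · rw [← h, hy0]
  -- y differentiable at 0 with derivative 0
  have hmem : Ioo (-ε) ε ∈ 𝓝 (0 : ℝ) := Ioo_mem_nhds (by linarith) hε
  have hdiff : DifferentiableAt ℝ y 0 := by
    have := (hy.contDiffAt hmem)
    exact this.differentiableAt (by simp)
  have hslope : Tendsto (fun a => y a / a) (𝓝[≠] (0 : ℝ)) (𝓝 0) := by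
    have h1 : HasDerivAt y 0 0 := by have := hdiff.hasDerivAt; rwa [hy'0] at this
    have := hasDerivAt_iff_tendsto_slope.mp h1
    refine this.congr' ?_
    filter_upwards [self_mem_nhdsWithin] with a ha
    simp [slope, hy0, div_eq_inv_mul]
  -- iterate
  set a : ℕ → ℝ := fun n => Real.exp lam ^ n * x with ha
  have hamem : ∀ n, a n ∈ Ioo (-ε) ε := by
    intro n
    have h1 : 0 < a n := mul_pos (pow_pos hq0 n) hx0
    have h2 : a n ≤ x := by
      have h3 : Real.exp lam ^ n ≤ 1 := pow_le_one₀ hq0.le hq1.le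
      show Real.exp lam ^ n * x ≤ x
      nlinarith
    exact ⟨by linarith, by linarith⟩
  have hiter : ∀ n, y (a n) = Real.exp lam ^ n * y x := by
    intro n
    induction n with
    | zero => simp [ha]
    | succ n ih =>
      have := hfe (a n) (hamem n)
      rw [ha] at this ⊢
      simp only [pow_succ] at *
      rw [mul_comm (Real.exp lam ^ n) (Real.exp lam), mul_assoc] at *
      rw [this, ih]; ring
  have hconst : ∀ n, y (a n) / a n = y x / x := by
    intro n
    rw [hiter n, ha]
    field_simp
  have hato : Tendsto a atTop (𝓝[≠] (0 : ℝ)) := by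
    apply tendsto_nhdsWithin_of_tendsto_nhds_of_eventually_within
    · have : Tendsto (fun n => Real.exp lam ^ n) atTop (𝓝 0) :=
        tendsto_pow_atTop_nhds_zero_of_lt_one hq0.le hq1
      simpa using this.mul_const x
    · filter_upwards with n
      exact ne_of_gt (mul_pos (pow_pos hq0 n) hx0)
  have : Tendsto (fun n => y (a n) / a n) atTop (𝓝 0) := hslope.comp hato
  rw [funext hconst] at this
  have h0 : y x / x = 0 := tendsto_nhds_unique tendsto_const_nhds this
  field_simp at h0
  simpa using h0
end

section
/- Let P : ℝ → ℝ be a continuously differentiable periodic function with period 1 and let λ ≠ 0. If the function u ↦ P(u) + λ⁻¹ P'(u) converges as u → -∞, then P is constant. -/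
/-!
The function `f = P + λ⁻¹ P'` is again 1-periodic, and a periodic function with a limit at `-∞`
equals that limit everywhere, so `f ≡ L`. At a point where `P` attains its maximum, and at one
where it attains its minimum, `P'` vanishes, so both extreme values of `P` equal `L`.
-/

open Filter Topology

namespace Function

theorem Periodic.deriv {𝕜 F : Type*} [NontriviallyNormedField 𝕜] [NormedAddCommGroup F]
    [NormedSpace 𝕜 F] {f : 𝕜 → F} {c : 𝕜} (h : Periodic f c) : Periodic (deriv f) c := by
  intro x
  rw [← deriv_comp_add_const, funext h]

theorem Periodic.eq_of_tendsto_atBot {α : Type*} [TopologicalSpace α] [T2Space α] {f : ℝ → α}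
    {c : ℝ} (h : Periodic f c) (hc : 0 < c) {L : α} (hf : Tendsto f atBot (𝓝 L)) (x : ℝ) :
    f x = L := by
  have hshift : Tendsto (fun n : ℕ => x - n * c) atTop atBot :=
    tendsto_atBot_add_const_left _ x <| tendsto_neg_atBot_iff.2 <|
      tendsto_natCast_atTop_atTop.atTop_mul_const hc
  refine tendsto_nhds_unique tendsto_const_nhds ((hf.comp hshift).congr fun n => ?_)
  exact h.sub_nat_mul_eq n

section Extrema

variable {α : Type*} [LinearOrder α] [TopologicalSpace α] {f : ℝ → α} {c : ℝ}

theorem Periodic.exists_forall_ge_of_continuous [ClosedIciTopology α] (h : Periodic f c)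
    (hc : c ≠ 0) (hf : Continuous f) : ∃ x, ∀ y, f y ≤ f x := by
  obtain ⟨_, ⟨x, rfl⟩, hx⟩ := (h.compact_of_continuous hc hf).exists_isGreatest (Set.range_nonempty f)
  exact ⟨x, fun y => hx ⟨y, rfl⟩⟩

theorem Periodic.exists_forall_le_of_continuous [ClosedIicTopology α] (h : Periodic f c)
    (hc : c ≠ 0) (hf : Continuous f) : ∃ x, ∀ y, f x ≤ f y := by
  obtain ⟨_, ⟨x, rfl⟩, hx⟩ := (h.compact_of_continuous hc hf).exists_isLeast (Set.range_nonempty f)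
  exact ⟨x, fun y => hx ⟨y, rfl⟩⟩

end Extrema

end Function

theorem periodic_combination_converges_implies_const_general
    (P : ℝ → ℝ) (hP : ContDiff ℝ 1 P) (hper : Function.Periodic P 1)
    (lam : ℝ)
    (hconv : ∃ L : ℝ, Tendsto (fun u => P u + lam⁻¹ * deriv P u) atBot (𝓝 L)) :
    ∀ u v : ℝ, P u = P v := by
  obtain ⟨L, hL⟩ := hconv
  have hcomb_per : Function.Periodic (fun u => P u + lam⁻¹ * deriv P u) 1 := fun u => by
    simp only [hper u, hper.deriv u]
  have eq_at_crit : ∀ u, deriv P u = 0 → P u = L := fun u hu => by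
    simpa [hu] using hcomb_per.eq_of_tendsto_atBot one_pos hL u
  obtain ⟨u₀, hmax⟩ := hper.exists_forall_ge_of_continuous one_ne_zero hP.continuous
  obtain ⟨u₁, hmin⟩ := hper.exists_forall_le_of_continuous one_ne_zero hP.continuous
  have hmax_eq : P u₀ = L := eq_at_crit u₀ (IsLocalMax.deriv_eq_zero (.of_forall hmax))
  have hmin_eq : P u₁ = L := eq_at_crit u₁ (IsLocalMin.deriv_eq_zero (.of_forall hmin))
  intro u v
  linarith [hmax u, hmax v, hmin u, hmin v]

/-- If P is a C¹ function of period 1, λ ≠ 0, and u ↦ P(u) + λ⁻¹ P'(u)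
converges as u → -∞, then P is constant. -/
theorem periodic_combination_converges_implies_const
    (P : ℝ → ℝ) (hP : ContDiff ℝ 1 P) (hper : Function.Periodic P 1)
    (lam : ℝ) (hlam : lam ≠ 0)
    (hconv : ∃ L : ℝ, Tendsto (fun u => P u + lam⁻¹ * deriv P u) atBot (𝓝 L)) :
    ∀ u v : ℝ, P u = P v :=
  periodic_combination_converges_implies_const_general P hP hper lam hconv
end

section
/- Let M > 0, and let a, l, Q, r be real numbers with β := a² − l² + Q² and Δ(x) := x² − 2Mx + β, and suppose r > r₊ := M + √(M² − β) (so Δ(r) > 0) with M² ≥ β. Then there is no polynomial P(x) with real coefficients such that [Δ'(x)(r² − x²) + 4xΔ(x)]² − 16x²Δ(r)Δ(x) = P(x)² identically in x. Consequently √(1 − h²(x)) is not a rational function of x, where h(x) = 4x√(Δ(r)Δ(x)) / (Δ'(x)(r² − x²) + 4xΔ(x)). -/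
/-!
Write `G = Δ'(x)(r² - x²) + 4xΔ(x)` (`shadowDenom`) for the denominator of `h` and
`F = G² - 16x²Δ(r)Δ(x)` (`shadowRadicand`), so that `1 - h² = F / G²` wherever `G ≠ 0`. If `F = P²`, then `P` is a
cubic, and its four coefficients are forced, up to a common sign, by the top four coefficients of
`F`; the constant coefficient then says `16 M² Δ(r) (r² + Δ(r)) = 0`, impossible for `M ≠ 0` and
`Δ(r) > 0`. If `√(1 - h²) = p / q` for large `x`, then `F q² = (p G)²` as polynomials, and since
`ℝ[X]` is integrally closed, `q ∣ p G` and `F` is again a square.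
-/

open Polynomial Filter

theorem Polynomial.coeff_sq {R : Type*} [CommRing R] (P : R[X]) (n : ℕ) :
    (P ^ 2).coeff n = ∑ i ∈ Finset.range (n + 1), P.coeff i * P.coeff (n - i) := by
  rw [sq, coeff_mul,
    Finset.Nat.sum_antidiagonal_eq_sum_range_succ (fun i j => P.coeff i * P.coeff j)]

theorem Polynomial.eq_of_eventually_eval_eq {p q : ℝ[X]}
    (h : ∀ᶠ x in atTop, p.eval x = q.eval x) : p = q :=
  eq_of_infinite_eval_eq p q <| frequently_cofinite_iff_infinite.1 <|
    h.frequently.filter_mono atTop_le_cofinite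

theorem Polynomial.eventually_atTop_eval_nonneg {P : ℝ[X]} (hdeg : 0 < P.degree)
    (hlc : 0 ≤ P.leadingCoeff) : ∀ᶠ x in atTop, 0 ≤ P.eval x :=
  (tendsto_atTop_of_leadingCoeff_nonneg P hdeg hlc).eventually_ge_atTop 0

theorem exists_eq_sq_of_mul_sq_eq_sq {R : Type*} [CommRing R] [IsDomain R]
    [IsIntegrallyClosed R] {f a b : R} (hb : b ≠ 0) (h : f * b ^ 2 = a ^ 2) :
    ∃ c, f = c ^ 2 := by
  have hdvd : b ^ 2 ∣ a ^ 2 := ⟨f, by rw [← h, mul_comm]⟩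
  obtain ⟨c, rfl⟩ := (IsIntegrallyClosed.pow_dvd_pow_iff two_ne_zero).mp hdvd
  exact ⟨c, mul_right_cancel₀ (pow_ne_zero 2 hb) (by rw [h]; ring)⟩

noncomputable def horizonPoly (M β : ℝ) : ℝ[X] := X ^ 2 - C (2 * M) * X + C β

noncomputable def shadowDenom (M β r : ℝ) : ℝ[X] :=
  derivative (horizonPoly M β) * (C (r ^ 2) - X ^ 2) + 4 * X * horizonPoly M β

noncomputable def shadowRadicand (M β r : ℝ) : ℝ[X] :=
  shadowDenom M β r ^ 2 - C (16 * (horizonPoly M β).eval r) * X ^ 2 * horizonPoly M β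

noncomputable def shadowH (M β r x : ℝ) : ℝ :=
  4 * x * √((horizonPoly M β).eval r * (horizonPoly M β).eval x) / (shadowDenom M β r).eval x

section

variable {M β r : ℝ}

theorem horizonPoly_eval (x : ℝ) : (horizonPoly M β).eval x = x ^ 2 - 2 * M * x + β := by
  simp [horizonPoly]

theorem derivative_horizonPoly : derivative (horizonPoly M β) = 2 * X - C (2 * M) := by
  simp [horizonPoly]
  ring

theorem horizonPoly_eval_pos (h : M + √(M ^ 2 - β) < r) : 0 < (horizonPoly M β).eval r := by
  have hs : M ^ 2 - β ≤ √(M ^ 2 - β) ^ 2 := Real.sq_sqrt' ▸ le_max_left _ _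
  have hpos : 0 < (r - M - √(M ^ 2 - β)) * (r - M + √(M ^ 2 - β)) :=
    mul_pos (by linarith) (by linarith [Real.sqrt_nonneg (M ^ 2 - β)])
  rw [horizonPoly_eval]
  nlinarith

theorem eventually_horizonPoly_eval_nonneg : ∀ᶠ x in atTop, 0 ≤ (horizonPoly M β).eval x := by
  have hmonic : (horizonPoly M β).Monic := by unfold horizonPoly; monicity!
  refine eventually_atTop_eval_nonneg (natDegree_pos_iff_degree_pos.mp ?_) ?_
  · rw [show (horizonPoly M β).natDegree = 2 by unfold horizonPoly; compute_degree!]; norm_num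
  · rw [hmonic.leadingCoeff]; exact zero_le_one

theorem shadowDenom_eval (x : ℝ) : (shadowDenom M β r).eval x
    = (2 * x - 2 * M) * (r ^ 2 - x ^ 2) + 4 * x * (x ^ 2 - 2 * M * x + β) := by
  simp [shadowDenom, derivative_horizonPoly, horizonPoly_eval]

theorem shadowDenom_ne_zero : shadowDenom M β r ≠ 0 := by
  have hdeg : (shadowDenom M β r).natDegree = 3 := by
    rw [shadowDenom, derivative_horizonPoly, horizonPoly]
    compute_degree!
  intro h
  simp [h] at hdeg

theorem shadowRadicand_eq {D : ℝ} (hD : (horizonPoly M β).eval r = D) :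
    shadowRadicand M β r = C 4 * X ^ 6 + C (-24 * M) * X ^ 5
      + C (36 * M ^ 2 + 8 * r ^ 2 + 16 * β - 16 * D) * X ^ 4
      + C (-32 * M * r ^ 2 - 48 * M * β + 32 * D * M) * X ^ 3
      + C (4 * (r ^ 2 + 2 * β) ^ 2 + 24 * M ^ 2 * r ^ 2 - 16 * D * β) * X ^ 2
      + C (-8 * M * r ^ 2 * (r ^ 2 + 2 * β)) * X + C (4 * M ^ 2 * r ^ 4) := by
  rw [horizonPoly_eval] at hD
  subst hD
  rw [shadowRadicand, shadowDenom, derivative_horizonPoly, horizonPoly_eval, horizonPoly]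
  simp only [map_add, map_sub, map_mul, map_neg, map_pow, C_ofNat]
  ring

theorem shadowRadicand_natDegree : (shadowRadicand M β r).natDegree = 6 := by
  rw [shadowRadicand_eq rfl]
  compute_degree!

theorem shadowRadicand_leadingCoeff : (shadowRadicand M β r).leadingCoeff = 4 := by
  rw [leadingCoeff, shadowRadicand_natDegree, shadowRadicand_eq rfl]
  compute_degree!

theorem shadowRadicand_ne_sq (hM : M ≠ 0) (hD : 0 < (horizonPoly M β).eval r) (P : ℝ[X]) :
    shadowRadicand M β r ≠ P ^ 2 := by
  intro h
  have hdeg : P.natDegree = 3 := by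
    have h6 := natDegree_pow P 2
    rw [← h, shadowRadicand_natDegree] at h6
    omega
  rw [shadowRadicand_eq rfl] at h
  have hcoeff (n : ℕ) := (congrArg (coeff · n) h).trans (coeff_sq P n)
  have e6 := hcoeff 6
  have e5 := hcoeff 5
  have e4 := hcoeff 4
  have e3 := hcoeff 3
  have e0 := hcoeff 0
  simp only [coeff_add, coeff_C_mul, coeff_X_pow, coeff_C, coeff_X, Finset.sum_range_succ,
    Finset.sum_range_zero] at e6 e5 e4 e3 e0
  norm_num [coeff_eq_zero_of_natDegree_lt, hdeg] at e6 e5 e4 e3 e0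
  generalize (horizonPoly M β).eval r = D at *
  generalize P.coeff 0 = p₀, P.coeff 1 = p₁, P.coeff 2 = p₂, P.coeff 3 = p₃ at *
  obtain rfl : p₂ = -3 * M * p₃ := by linear_combination (p₂ / 4) * e6 - (p₃ / 8) * e5
  obtain rfl : p₁ = (r ^ 2 + 2 * β - 2 * D) * p₃ := by
    linear_combination (-p₃ / 8) * e4 + (p₁ / 4 + 9 * M ^ 2 * p₃ / 8) * e6
  obtain rfl : p₀ = -(M * r ^ 2 + 2 * D * M) * p₃ := by
    linear_combination (-p₃ / 8) * e3 + (p₀ / 4 - 3 * M * (r ^ 2 + 2 * β - 2 * D) * p₃ / 4) * e6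
  have hzero : 16 * M ^ 2 * D * (r ^ 2 + D) = 0 := by
    linear_combination -e0 + (M * r ^ 2 + 2 * D * M) ^ 2 * e6
  have hpos : 0 < 16 * M ^ 2 * D * (r ^ 2 + D) := by positivity
  exact hpos.ne' hzero

theorem one_sub_shadowH_sq {x : ℝ}
    (hΔ : 0 ≤ (horizonPoly M β).eval r * (horizonPoly M β).eval x)
    (hG : (shadowDenom M β r).eval x ≠ 0) :
    1 - shadowH M β r x ^ 2 = (shadowRadicand M β r).eval x / (shadowDenom M β r).eval x ^ 2 := by
  rw [shadowH, shadowRadicand, div_pow, mul_pow, Real.sq_sqrt hΔ]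
  field_simp
  simp only [eval_sub, eval_mul, eval_pow, eval_C, eval_X]
  ring

theorem shadowRadicand_mul_sq_eq {p q : ℝ[X]} (hD : 0 ≤ (horizonPoly M β).eval r) (hq : q ≠ 0)
    (hpq : ∀ᶠ x in atTop, √(1 - shadowH M β r x ^ 2) = p.eval x / q.eval x) :
    shadowRadicand M β r * q ^ 2 = (p * shadowDenom M β r) ^ 2 := by
  have hF : ∀ᶠ x in atTop, 0 ≤ (shadowRadicand M β r).eval x := by
    refine eventually_atTop_eval_nonneg (natDegree_pos_iff_degree_pos.mp ?_) ?_
    · rw [shadowRadicand_natDegree]; norm_num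
    · rw [shadowRadicand_leadingCoeff]; norm_num
  apply eq_of_eventually_eval_eq
  filter_upwards [hpq, hF, eventually_horizonPoly_eval_nonneg, q.eventually_atTop_not_isRoot hq,
    (shadowDenom M β r).eventually_atTop_not_isRoot shadowDenom_ne_zero] with x hx hFx hΔx hqx hGx
  rw [one_sub_shadowH_sq (mul_nonneg hD hΔx) hGx] at hx
  have hsq := Real.sq_sqrt (div_nonneg hFx (sq_nonneg ((shadowDenom M β r).eval x)))
  rw [hx, div_pow, div_eq_div_iff (pow_ne_zero 2 hqx) (pow_ne_zero 2 hGx)] at hsq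
  simp only [eval_mul, eval_pow]
  linear_combination -hsq

end

theorem sqrt_one_sub_h_sq_irrational_general (M a l Q r : ℝ) (hM : 0 < M)
    (hr : M + Real.sqrt (M ^ 2 - (a ^ 2 - l ^ 2 + Q ^ 2)) < r) :
    (¬ ∃ P : Polynomial ℝ, ∀ x : ℝ,
      ((2 * x - 2 * M) * (r ^ 2 - x ^ 2)
          + 4 * x * (x ^ 2 - 2 * M * x + (a ^ 2 - l ^ 2 + Q ^ 2))) ^ 2
        - 16 * x ^ 2 * (r ^ 2 - 2 * M * r + (a ^ 2 - l ^ 2 + Q ^ 2))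
            * (x ^ 2 - 2 * M * x + (a ^ 2 - l ^ 2 + Q ^ 2))
        = (P.eval x) ^ 2) ∧
    (¬ ∃ p q : Polynomial ℝ, q ≠ 0 ∧ ∀ x : ℝ, r < x →
      Real.sqrt (1 -
        (4 * x * Real.sqrt ((r ^ 2 - 2 * M * r + (a ^ 2 - l ^ 2 + Q ^ 2))
              * (x ^ 2 - 2 * M * x + (a ^ 2 - l ^ 2 + Q ^ 2)))
          / ((2 * x - 2 * M) * (r ^ 2 - x ^ 2)
              + 4 * x * (x ^ 2 - 2 * M * x + (a ^ 2 - l ^ 2 + Q ^ 2)))) ^ 2)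
        = p.eval x / q.eval x) := by
  set β := a ^ 2 - l ^ 2 + Q ^ 2
  have hD : 0 < (horizonPoly M β).eval r := horizonPoly_eval_pos hr
  refine ⟨fun ⟨P, hP⟩ => shadowRadicand_ne_sq hM.ne' hD P ?_, fun ⟨p, q, hq, hpq⟩ => ?_⟩
  · refine Polynomial.funext fun x => ?_
    simp only [shadowRadicand, eval_sub, eval_mul, eval_pow, eval_C, eval_X, horizonPoly_eval,
      shadowDenom_eval]
    linear_combination hP x
  · have hpq' : ∀ᶠ x in atTop, √(1 - shadowH M β r x ^ 2) = p.eval x / q.eval x :=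
      (eventually_gt_atTop r).mono fun x hx => by
        simpa only [shadowH, horizonPoly_eval, shadowDenom_eval] using hpq x hx
    obtain ⟨P, hP⟩ := exists_eq_sq_of_mul_sq_eq_sq hq (shadowRadicand_mul_sq_eq hD.le hq hpq')
    exact shadowRadicand_ne_sq hM.ne' hD P hP

/-- Irrationality of √(1−h²) for the Kerr-Newman-Taub-NUT shadow: with
Δ(x) = x² − 2Mx + β, β = a² − l² + Q², M > 0, M² ≥ β, and observer radius
r > r₊ = M + √(M² − β), the degree-6 polynomial
[Δ'(x)(r²−x²) + 4xΔ(x)]² − 16x²Δ(r)Δ(x) is not the square of a real polynomial;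
consequently √(1−h²(x)), with
h(x) = 4x√(Δ(r)Δ(x)) / (Δ'(x)(r²−x²) + 4xΔ(x)), is not a rational function. -/
theorem sqrt_one_sub_h_sq_irrational (M a l Q r : ℝ) (hM : 0 < M)
    (hβ : a ^ 2 - l ^ 2 + Q ^ 2 ≤ M ^ 2)
    (hr : M + Real.sqrt (M ^ 2 - (a ^ 2 - l ^ 2 + Q ^ 2)) < r) :
    (¬ ∃ P : Polynomial ℝ, ∀ x : ℝ,
      ((2 * x - 2 * M) * (r ^ 2 - x ^ 2)
          + 4 * x * (x ^ 2 - 2 * M * x + (a ^ 2 - l ^ 2 + Q ^ 2))) ^ 2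
        - 16 * x ^ 2 * (r ^ 2 - 2 * M * r + (a ^ 2 - l ^ 2 + Q ^ 2))
            * (x ^ 2 - 2 * M * x + (a ^ 2 - l ^ 2 + Q ^ 2))
        = (P.eval x) ^ 2) ∧
    (¬ ∃ p q : Polynomial ℝ, q ≠ 0 ∧ ∀ x : ℝ, r < x →
      Real.sqrt (1 -
        (4 * x * Real.sqrt ((r ^ 2 - 2 * M * r + (a ^ 2 - l ^ 2 + Q ^ 2))
              * (x ^ 2 - 2 * M * x + (a ^ 2 - l ^ 2 + Q ^ 2)))
          / ((2 * x - 2 * M) * (r ^ 2 - x ^ 2)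
              + 4 * x * (x ^ 2 - 2 * M * x + (a ^ 2 - l ^ 2 + Q ^ 2)))) ^ 2)
        = p.eval x / q.eval x) :=
  sqrt_one_sub_h_sq_irrational_general M a l Q r hM hr
end

section
/- Along any C¹ curve s ↦ (a(s), l(s), Q(s), θ(s)) satisfying dθ = (sin θ / a) dl, da = −cos θ dl, dQ = 2(l + a cos θ) dl (with a(s) ≠ 0, sin θ(s) ≠ 0), the three functions a sin θ, l + a cos θ, and Q + 2a cos θ (l + a cos θ) are constant. -/
/-!
In Cartesian coordinates `x = a cos θ`, `y = a sin θ` the system reads `x' = -l'`, `y' = 0`: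
the point `(x, y)` slides horizontally in step with `l`. Hence `y` and `l + x` are conserved,
and then `Q' = 2 (l + x) l' = -2 (l + x) x'` integrates to `Q + 2 x (l + x) = const`.
-/

open Real

theorem eq_of_forall_hasDerivAt_zero {f : ℝ → ℝ} (hf : ∀ x, HasDerivAt f 0 x) (x y : ℝ) :
    f x = f y :=
  is_const_of_deriv_eq_zero (fun x => (hf x).differentiableAt) (fun x => (hf x).deriv) x y

section

variable {a l Q u θ : ℝ → ℝ} {l' s : ℝ}

theorem hasDerivAt_mul_sin_eq_zero (ha : HasDerivAt a (-cos (θ s) * l') s)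
    (hθ : HasDerivAt θ (sin (θ s) / a s * l') s) (ha₀ : a s ≠ 0) :
    HasDerivAt (fun t => a t * sin (θ t)) 0 s := by
  refine (ha.mul hθ.sin).congr_deriv ?_
  field_simp
  ring

theorem hasDerivAt_mul_cos_eq_neg (ha : HasDerivAt a (-cos (θ s) * l') s)
    (hθ : HasDerivAt θ (sin (θ s) / a s * l') s) (ha₀ : a s ≠ 0) :
    HasDerivAt (fun t => a t * cos (θ t)) (-l') s := by
  refine (ha.mul hθ.cos).congr_deriv ?_
  field_simp
  linear_combination (-l') * sin_sq_add_cos_sq (θ s)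

theorem hasDerivAt_add_eq_zero_of_neg (hl : HasDerivAt l l' s) (hu : HasDerivAt u (-l') s) :
    HasDerivAt (fun t => l t + u t) 0 s :=
  (hl.add hu).congr_deriv (add_neg_cancel l')

theorem hasDerivAt_add_two_mul_mul_add_eq_zero (hl : HasDerivAt l l' s)
    (hu : HasDerivAt u (-l') s) (hQ : HasDerivAt Q (2 * (l s + u s) * l') s) :
    HasDerivAt (fun t => Q t + 2 * u t * (l t + u t)) 0 s := by
  refine (hQ.add ((hu.const_mul 2).mul (hasDerivAt_add_eq_zero_of_neg hl hu))).congr_deriv ?_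
  ring

end

theorem second_degeneracy_first_integrals_general
    (a l Q θ : ℝ → ℝ)
    (ha : Differentiable ℝ a) (hl : Differentiable ℝ l)
    (hQ : Differentiable ℝ Q) (hθ : Differentiable ℝ θ)
    (hane : ∀ s, a s ≠ 0)
    (hdθ : ∀ s, deriv θ s = Real.sin (θ s) / a s * deriv l s)
    (hda : ∀ s, deriv a s = -Real.cos (θ s) * deriv l s)
    (hdQ : ∀ s, deriv Q s = 2 * (l s + a s * Real.cos (θ s)) * deriv l s) :
    ∀ s t : ℝ,
      a s * Real.sin (θ s) = a t * Real.sin (θ t) ∧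
      l s + a s * Real.cos (θ s) = l t + a t * Real.cos (θ t) ∧
      Q s + 2 * a s * Real.cos (θ s) * (l s + a s * Real.cos (θ s))
        = Q t + 2 * a t * Real.cos (θ t) * (l t + a t * Real.cos (θ t)) := by
  intro s t
  have ha' (s : ℝ) := hda s ▸ (ha s).hasDerivAt
  have hθ' (s : ℝ) := hdθ s ▸ (hθ s).hasDerivAt
  have hQ' (s : ℝ) := hdQ s ▸ (hQ s).hasDerivAt
  have hy (s : ℝ) := hasDerivAt_mul_sin_eq_zero (ha' s) (hθ' s) (hane s)
  have hx (s : ℝ) := hasDerivAt_mul_cos_eq_neg (ha' s) (hθ' s) (hane s)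
  have hlx (s : ℝ) := hasDerivAt_add_eq_zero_of_neg (hl s).hasDerivAt (hx s)
  have hQx (s : ℝ) := hasDerivAt_add_two_mul_mul_add_eq_zero (hl s).hasDerivAt (hx s) (hQ' s)
  refine ⟨eq_of_forall_hasDerivAt_zero hy s t, eq_of_forall_hasDerivAt_zero hlx s t, ?_⟩
  simpa only [mul_assoc] using eq_of_forall_hasDerivAt_zero hQx s t

/-- Along any C¹ curve satisfying dθ = (sin θ / a) dl, da = −cos θ dl and
dQ = 2(l + a cos θ) dl (with a ≠ 0, sin θ ≠ 0), the functions a sin θ,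
l + a cos θ, and Q + 2a cos θ (l + a cos θ) are constant. -/
theorem second_degeneracy_first_integrals
    (a l Q θ : ℝ → ℝ)
    (ha : Differentiable ℝ a) (hl : Differentiable ℝ l)
    (hQ : Differentiable ℝ Q) (hθ : Differentiable ℝ θ)
    (hane : ∀ s, a s ≠ 0) (hsin : ∀ s, Real.sin (θ s) ≠ 0)
    (hdθ : ∀ s, deriv θ s = Real.sin (θ s) / a s * deriv l s)
    (hda : ∀ s, deriv a s = -Real.cos (θ s) * deriv l s)
    (hdQ : ∀ s, deriv Q s = 2 * (l s + a s * Real.cos (θ s)) * deriv l s) :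
    ∀ s t : ℝ,
      a s * Real.sin (θ s) = a t * Real.sin (θ t) ∧
      l s + a s * Real.cos (θ s) = l t + a t * Real.cos (θ t) ∧
      Q s + 2 * a s * Real.cos (θ s) * (l s + a s * Real.cos (θ s))
        = Q t + 2 * a t * Real.cos (θ t) * (l t + a t * Real.cos (θ t)) :=
  second_degeneracy_first_integrals_general a l Q θ ha hl hQ hθ hane hdθ hda hdQ
end

section
/- Let M > 0, Δ(r) > 0, r > M, a ≠ 0, sin θ ≠ 0, and consider real infinitesimals dθ, da, dr, dQ subject to: (i) aQ dQ + a(r − M) dr + (a² − Δ(r)) da − (a cos θ Δ(r)/sin θ) dθ = 0; (ii) a cos θ dθ + sin θ da = 0; (iii) −rQ dQ + (a/sin θ)(l(M − r) + aM cos θ) dθ = 0 with Q ≠ 0; and (iv) the residual condition (l + a cos θ) dθ = 0 together with, if l + a cos θ = 0, the differential consistency a(sin θ)⁻¹ dθ = 0. Then dθ = da = dr = dQ = 0. -/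
/-- Final elimination step of the main theorem: with M > 0, Δ(r) > 0, r > M,
a ≠ 0, sin θ ≠ 0, Q ≠ 0, the linear system (i)–(iv) on the infinitesimals
dθ, da, dr, dQ forces dθ = da = dr = dQ = 0. -/
theorem no_continuous_degeneracy_elimination
    (M r a l Q θ dθ da dr dQ : ℝ)
    (hM : 0 < M)
    (hΔ : 0 < r ^ 2 - 2 * M * r + a ^ 2 - l ^ 2 + Q ^ 2)
    (hrM : M < r) (hane : a ≠ 0) (hsin : Real.sin θ ≠ 0) (hQne : Q ≠ 0)
    (hi : a * Q * dQ + a * (r - M) * dr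
        + (a ^ 2 - (r ^ 2 - 2 * M * r + a ^ 2 - l ^ 2 + Q ^ 2)) * da
        - a * Real.cos θ * (r ^ 2 - 2 * M * r + a ^ 2 - l ^ 2 + Q ^ 2) / Real.sin θ * dθ
        = 0)
    (hii : a * Real.cos θ * dθ + Real.sin θ * da = 0)
    (hiii : -r * Q * dQ
        + a / Real.sin θ * (l * (M - r) + a * M * Real.cos θ) * dθ = 0)
    (hiv : (l + a * Real.cos θ) * dθ = 0)
    (hiv' : l + a * Real.cos θ = 0 → a / Real.sin θ * dθ = 0) :
    dθ = 0 ∧ da = 0 ∧ dr = 0 ∧ dQ = 0 := by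
  have hr0 : (0:ℝ) < r := lt_trans hM hrM
  have hdθ : dθ = 0 := by
    rcases eq_or_ne (l + a * Real.cos θ) 0 with h | h
    · have := hiv' h
      have : a / Real.sin θ ≠ 0 := div_ne_zero hane hsin
      have h2 := hiv' h
      rcases mul_eq_zero.mp h2 with h3 | h3
      · exact absurd h3 this
      · exact h3
    · rcases mul_eq_zero.mp hiv with h3 | h3
      · exact absurd h3 h
      · exact h3
  subst hdθ
  have hda : da = 0 := by
    have : Real.sin θ * da = 0 := by linarith [hii]
    rcases mul_eq_zero.mp this with h | h
    · exact absurd h hsin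
    · exact h
  subst hda
  have hdQ : dQ = 0 := by
    have h : -r * Q * dQ = 0 := by linarith [hiii]
    have : -r * Q ≠ 0 := mul_ne_zero (neg_ne_zero.mpr (ne_of_gt hr0)) hQne
    rcases mul_eq_zero.mp h with h2 | h2
    · exact absurd h2 this
    · exact h2
  subst hdQ
  refine ⟨rfl, rfl, ?_, rfl⟩
  have h : a * (r - M) * dr = 0 := by linarith [hi]
  have hne : a * (r - M) ≠ 0 := mul_ne_zero hane (ne_of_gt (by linarith))
  rcases mul_eq_zero.mp h with h2 | h2
  · exact absurd h2 hne
  · exact h2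
end
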